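/- (Theorem 3.2) For every n ≥ 1, the total number of nodes contained in all 2-tree-lines starting from the root that lie within the full binary tree with n levels — i.e., the sum over all such 2-tree-lines v₁, …, v_N of (N + 1), counting the root — is at most (2·n)·(2^n)^(29/10). Hence for a full support tree with m = 2^n − 1 nodes, the run time of the brute force method of checking all possible 2-tree-lines has order O(m^{2.9}·log m). -/

import Mathlib

/-- `q` is a child of `p` in the infinite binary tree, nodes being encoded
as finite boolean strings (the root is the empty string). -/
def IsChild (p q : List Bool) : Prop := ∃ b : Bool, q = p ++ [b]

/-- A 2-tree-line starting from the root: a finite sequence `v₁, …, v_N` of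
pairwise distinct binary strings such that `v₁` is a child of the root
(i.e. has length 1), `v₂` is a child of the root or of `v₁`, and each
`v_{i+1}` with `i ≥ 2` is a child of `v_i` or of `v_{i-1}`. -/
def IsTwoTreeLine (v : List (List Bool)) : Prop :=
  v.Nodup ∧
  (∀ h : 0 < v.length, (v.get ⟨0, h⟩).length = 1) ∧
  (∀ h : 1 < v.length,
    IsChild [] (v.get ⟨1, h⟩) ∨
      IsChild (v.get ⟨0, by omega⟩) (v.get ⟨1, h⟩)) ∧
  (∀ i : ℕ, ∀ h : i + 2 < v.length,
    IsChild (v.get ⟨i + 1, by omega⟩) (v.get ⟨i + 2, h⟩) ∨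
      IsChild (v.get ⟨i, by omega⟩) (v.get ⟨i + 2, h⟩))

/-!
Classify the lines by the depth `d` of their last node and by how that node hangs off the
previous one: as its child (`a d` lines), one level below it but not its child (`b d`), or on
the same level (`c d`). Appending a node gives `a (d+1) ≤ 2 (a d + b d + c d)`,
`b (d+1) ≤ 2 c d` and `c d ≤ a d + 2 b d`; the last bound holds because a node on the level of
a child just visited must be that child's sibling, as lines do not repeat nodes. Hence
`a d + √3 b d` grows at most by the factor `4 + 2√3 < 2 ^ 2.9` per level, which bounds the number
of lines in the tree with `n` levels by `(2 ^ n) ^ 2.9`, and each of them has fewer than `2n`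
nodes.
-/

-- Missing nodes default to the root `[]`, which makes the conditions on `v₁` and `v₂` instances
-- of the general one (see `isTwoTreeLine_iff`).
def lastNode (v : List (List Bool)) : List Bool := v.getLastD []

def prevNode (v : List (List Bool)) : List Bool := v.dropLast.getLastD []

@[simp] lemma lastNode_nil : lastNode [] = [] := rfl

@[simp] lemma prevNode_nil : prevNode [] = [] := rfl

@[simp] lemma lastNode_append_singleton (w : List (List Bool)) (x : List Bool) :
    lastNode (w ++ [x]) = x :=
  List.getLastD_concat

@[simp] lemma prevNode_append_singleton (w : List (List Bool)) (x : List Bool) :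
    prevNode (w ++ [x]) = lastNode w := by
  simp [prevNode, lastNode]

lemma lastNode_mem {w : List (List Bool)} (hw : w ≠ []) : lastNode w ∈ w := by
  obtain ⟨u, y, rfl⟩ := (w.eq_nil_or_concat').resolve_left hw
  simp

lemma IsChild.length_eq {p q : List Bool} (h : IsChild p q) : q.length = p.length + 1 := by
  obtain ⟨b, rfl⟩ := h
  simp

lemma isChild_nil_iff {q : List Bool} : IsChild [] q ↔ q.length = 1 := by
  simp [IsChild, List.length_eq_one_iff]

lemma lastNode_take_succ {v : List (List Bool)} {k : ℕ} (hk : k < v.length) :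
    lastNode (v.take (k + 1)) = v[k] := by
  rw [List.take_succ_eq_append_getElem hk, lastNode_append_singleton]

lemma prevNode_take_succ {v : List (List Bool)} {k : ℕ} (hk : k < v.length) :
    prevNode (v.take (k + 1)) = lastNode (v.take k) := by
  rw [List.take_succ_eq_append_getElem hk, prevNode_append_singleton]

lemma isTwoTreeLine_iff {v : List (List Bool)} :
    IsTwoTreeLine v ↔ v.Nodup ∧ ∀ k (hk : k < v.length),
      IsChild (lastNode (v.take k)) v[k] ∨ IsChild (prevNode (v.take k)) v[k] := by
  have take_one (h : 1 < v.length) :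
      lastNode (v.take 1) = v[0] ∧ prevNode (v.take 1) = [] :=
    ⟨lastNode_take_succ (k := 0) (by omega), prevNode_take_succ (k := 0) (by omega)⟩
  have take_two (i : ℕ) (h : i + 2 < v.length) :
      lastNode (v.take (i + 2)) = v[i + 1] ∧ prevNode (v.take (i + 2)) = v[i] := by
    rw [prevNode_take_succ (k := i + 1) (by omega)]
    exact ⟨lastNode_take_succ (k := i + 1) (by omega), lastNode_take_succ (k := i) (by omega)⟩
  simp only [IsTwoTreeLine, List.get_eq_getElem]
  refine and_congr_right fun _ => ⟨fun ⟨h0, h1, h2⟩ k hk => ?_, fun h => ⟨?_, ?_, ?_⟩⟩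
  · match k with
    | 0 => simpa [isChild_nil_iff] using h0 hk
    | 1 => simpa [take_one hk, or_comm] using h1 hk
    | i + 2 => simpa [take_two i hk] using h2 i hk
  · intro hk
    simpa [isChild_nil_iff] using h 0 hk
  · intro hk
    simpa [take_one hk, or_comm] using h 1 hk
  · intro i hk
    simpa [take_two i hk] using h (i + 2) hk

lemma isTwoTreeLine_append_singleton_iff {w : List (List Bool)} {x : List Bool} :
    IsTwoTreeLine (w ++ [x]) ↔
      IsTwoTreeLine w ∧ x ∉ w ∧ (IsChild (lastNode w) x ∨ IsChild (prevNode w) x) := by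
  simp only [isTwoTreeLine_iff, List.nodup_append, List.nodup_singleton, List.mem_singleton,
    forall_eq, List.forall_mem_ne', List.length_append, List.length_singleton,
    Nat.lt_succ_iff_lt_or_eq]
  constructor
  · rintro ⟨⟨hnd, -, hxw⟩, h⟩
    refine ⟨⟨hnd, fun k hk => ?_⟩, hxw, ?_⟩
    · simpa [List.take_append_of_le_length hk.le, List.getElem_append_left hk] using
        h k (Or.inl hk)
    · simpa using h w.length (Or.inr rfl)
  · rintro ⟨⟨hnd, h⟩, hxw, hx⟩
    refine ⟨⟨hnd, trivial, hxw⟩, ?_⟩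
    rintro k (hk | rfl)
    · simpa [List.take_append_of_le_length hk.le, List.getElem_append_left hk] using h k hk
    · simpa using hx

lemma IsTwoTreeLine.depth_bounds {v : List (List Bool)} (h : IsTwoTreeLine v) :
    (prevNode v).length ≤ (lastNode v).length ∧ (lastNode v).length ≤ (prevNode v).length + 1 ∧
      v.length ≤ (lastNode v).length + (prevNode v).length := by
  induction v using List.reverseRecOn with
  | nil => simp
  | append_singleton w x ih =>
    obtain ⟨hw, -, hx⟩ := isTwoTreeLine_append_singleton_iff.1 h
    obtain ⟨h₁, h₂, h₃⟩ := ih hw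
    simp only [lastNode_append_singleton, prevNode_append_singleton, List.length_append,
      List.length_singleton]
    rcases hx with hx | hx <;> have := hx.length_eq <;> omega

lemma IsTwoTreeLine.length_le {v : List (List Bool)} (h : IsTwoTreeLine v) :
    v.length ≤ 2 * (lastNode v).length := by
  have := h.depth_bounds
  omega

lemma finite_setOf_length_le_forall_mem {α : Type*} {T : Set α} (hT : T.Finite) (B : ℕ) :
    {l : List α | l.length ≤ B ∧ ∀ p ∈ l, p ∈ T}.Finite := by
  have := hT.to_subtype
  refine ((List.finite_length_le T B).image (List.map Subtype.val)).subset ?_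
  rintro l ⟨hl, hlT⟩
  lift l to List T using hlT
  exact ⟨l, by simpa using hl, rfl⟩

lemma finite_setOf_isTwoTreeLine (m : ℕ) :
    {v : List (List Bool) | IsTwoTreeLine v ∧ ∀ p ∈ v, p.length ≤ m}.Finite := by
  refine (finite_setOf_length_le_forall_mem (List.finite_length_le Bool m) (2 * m)).subset ?_
  rintro v ⟨hv, hm⟩
  refine ⟨?_, hm⟩
  rcases v.eq_nil_or_concat' with rfl | ⟨w, x, rfl⟩
  · simp
  · have := hv.length_le
    have := hm x (by simp)
    simp only [lastNode_append_singleton] at *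
    omega

theorem le_pow_of_recurrence {a b c t : ℕ → ℕ} {s : ℝ} (hs : 3 ≤ s ^ 2) (hs' : 3 ≤ 2 * s)
    (ht : ∀ d ≠ 0, t d ≤ a d + b d + c d) (ht₀ : t 0 ≤ 1) (hb₁ : b 1 = 0)
    (ha : ∀ d, a (d + 1) ≤ t d * 2) (hb : ∀ d, b (d + 1) ≤ c d * 2)
    (hc : ∀ d ≠ 0, c d ≤ a d + b d * 2) (d : ℕ) :
    (t d : ℝ) ≤ (4 + 2 * s) ^ d := by
  have hs₀ : 0 ≤ s := by linarith
  have ha' (d : ℕ) : (a (d + 1) : ℝ) ≤ t d * 2 := by exact_mod_cast ha d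
  have hb' (d : ℕ) : (b (d + 1) : ℝ) ≤ c d * 2 := by exact_mod_cast hb d
  have ht' (d : ℕ) : (t (d + 1) : ℝ) ≤ a (d + 1) + b (d + 1) + c (d + 1) := by
    exact_mod_cast ht (d + 1) d.succ_ne_zero
  have hc' (d : ℕ) : (c (d + 1) : ℝ) ≤ a (d + 1) + b (d + 1) * 2 := by
    exact_mod_cast hc (d + 1) d.succ_ne_zero
  -- `(1, s)` is a left sub-eigenvector, for the eigenvalue `4 + 2 * s`, of the matrix
  -- `!![4, 6; 2, 4]` that bounds `(a (d + 1), b (d + 1))` in terms of `(a d, b d)`.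
  have weight_step (d : ℕ) :
      (a (d + 2) : ℝ) + s * b (d + 2) ≤ (4 + 2 * s) * (a (d + 1) + s * b (d + 1)) := by
    have := mul_le_mul_of_nonneg_left (hb' (d + 1)) hs₀
    have := mul_le_mul_of_nonneg_left (hc' d) hs₀
    have := mul_le_mul_of_nonneg_right hs (Nat.cast_nonneg (α := ℝ) (b (d + 1)))
    linarith [ha' (d + 1), ht' d, hc' d]
  have weight (d : ℕ) : (a (d + 1) : ℝ) + s * b (d + 1) ≤ 2 * (4 + 2 * s) ^ d := by
    induction d with
    | zero =>
      have : a 1 ≤ 2 := (ha 0).trans (by omega)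
      simp only [hb₁, Nat.cast_zero, mul_zero, add_zero, pow_zero, mul_one]
      exact_mod_cast this
    | succ d ih =>
      calc (a (d + 2) : ℝ) + s * b (d + 2) ≤ (4 + 2 * s) * (a (d + 1) + s * b (d + 1)) :=
            weight_step d
        _ ≤ (4 + 2 * s) * (2 * (4 + 2 * s) ^ d) := by gcongr
        _ = 2 * (4 + 2 * s) ^ (d + 1) := by ring
  cases d with
  | zero => simpa using ht₀
  | succ d =>
    have := mul_le_mul_of_nonneg_right hs' (Nat.cast_nonneg (α := ℝ) (b (d + 1)))
    have := pow_nonneg (by linarith : (0 : ℝ) ≤ 4 + 2 * s) d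
    calc (t (d + 1) : ℝ) ≤ 2 * (a (d + 1) + s * b (d + 1)) := by linarith [ht' d, hc' d]
      _ ≤ 2 * (2 * (4 + 2 * s) ^ d) := by gcongr; exact weight d
      _ ≤ (4 + 2 * s) ^ (d + 1) := by rw [pow_succ]; nlinarith

theorem geom_sum_le_pow {x : ℝ} (hx : 2 ≤ x) (N : ℕ) : ∑ i ∈ Finset.range N, x ^ i ≤ x ^ N := by
  induction N with
  | zero => simp
  | succ N ih =>
    rw [Finset.sum_range_succ, pow_succ]
    nlinarith [pow_nonneg (by linarith : (0 : ℝ) ≤ x) N]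

namespace TwoTreeLine

open Finset

instance : DecidableRel IsChild := fun p q =>
  inferInstanceAs (Decidable (∃ b : Bool, q = p ++ [b]))

noncomputable def lines (m : ℕ) : Finset (List (List Bool)) :=
  (finite_setOf_isTwoTreeLine m).toFinset

lemma mem_lines {m : ℕ} {v : List (List Bool)} :
    v ∈ lines m ↔ IsTwoTreeLine v ∧ ∀ p ∈ v, p.length ≤ m :=
  Set.Finite.mem_toFinset _

lemma append_singleton_mem_lines_iff {m : ℕ} {w : List (List Bool)} {x : List Bool} :
    w ++ [x] ∈ lines m ↔ w ∈ lines m ∧ x ∉ w ∧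
      (IsChild (lastNode w) x ∨ IsChild (prevNode w) x) ∧ x.length ≤ m := by
  simp only [mem_lines, isTwoTreeLine_append_singleton_iff, List.mem_append, List.mem_singleton]
  grind

lemma length_lastNode_le {m : ℕ} {v : List (List Bool)} (hv : v ∈ lines m) :
    (lastNode v).length ≤ m := by
  rcases v.eq_nil_or_concat' with rfl | ⟨w, x, rfl⟩
  · simp
  · simpa using (append_singleton_mem_lines_iff.1 hv).2.2.2

noncomputable def linesAt (m d : ℕ) : Finset (List (List Bool)) :=
  {v ∈ lines m | (lastNode v).length = d}

noncomputable def childLinesAt (m d : ℕ) : Finset (List (List Bool)) :=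
  {v ∈ linesAt m d | IsChild (prevNode v) (lastNode v)}

noncomputable def jumpLinesAt (m d : ℕ) : Finset (List (List Bool)) :=
  {v ∈ linesAt m d | (prevNode v).length + 1 = d ∧ ¬IsChild (prevNode v) (lastNode v)}

noncomputable def levelLinesAt (m d : ℕ) : Finset (List (List Bool)) :=
  {v ∈ linesAt m d | (prevNode v).length = d}

lemma linesAt_subset (m d : ℕ) :
    linesAt m d ⊆ childLinesAt m d ∪ jumpLinesAt m d ∪ levelLinesAt m d := by
  intro v hv
  have hd := (mem_filter.1 hv).2
  obtain ⟨h₁, h₂, -⟩ := (mem_lines.1 (mem_filter.1 hv).1).1.depth_bounds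
  simp only [childLinesAt, jumpLinesAt, levelLinesAt, mem_union, mem_filter, hv, true_and]
  by_cases h : IsChild (prevNode v) (lastNode v)
  · exact Or.inl (Or.inl h)
  · rcases Nat.lt_or_ge (prevNode v).length d with h' | h'
    · exact Or.inl (Or.inr ⟨by omega, h⟩)
    · exact Or.inr (by omega)

lemma card_linesAt_le (m d : ℕ) :
    #(linesAt m d) ≤ #(childLinesAt m d) + #(jumpLinesAt m d) + #(levelLinesAt m d) :=
  (card_le_card (linesAt_subset m d)).trans
    ((card_union_le _ _).trans (Nat.add_le_add_right (card_union_le _ _) _))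

lemma card_linesAt_zero_le (m : ℕ) : #(linesAt m 0) ≤ 1 := by
  have eq_nil {v : List (List Bool)} (hv : v ∈ linesAt m 0) : v = [] := by
    rcases v.eq_nil_or_concat' with rfl | ⟨w, x, rfl⟩
    · rfl
    · simp only [linesAt, mem_filter, append_singleton_mem_lines_iff,
        lastNode_append_singleton] at hv
      obtain ⟨⟨-, -, hx | hx, -⟩, h0⟩ := hv <;> simp [hx.length_eq] at h0
  exact card_le_one.2 fun u hu v hv => (eq_nil hu).trans (eq_nil hv).symm

lemma jumpLinesAt_one (m : ℕ) : jumpLinesAt m 1 = ∅ := by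
  refine filter_false_of_mem fun v hv ⟨hprev, hchild⟩ => hchild ?_
  have hlast := (mem_filter.1 hv).2
  rw [List.length_eq_zero_iff.1 (by omega : (prevNode v).length = 0), isChild_nil_iff]
  exact hlast

lemma card_childLinesAt_succ_le (m d : ℕ) :
    #(childLinesAt m (d + 1)) ≤ #(linesAt m d) * 2 := by
  calc #(childLinesAt m (d + 1))
      ≤ #(image₂ (fun w b => w ++ [lastNode w ++ [b]]) (linesAt m d) univ) := by
        refine card_le_card fun v hv => ?_
        rcases v.eq_nil_or_concat' with rfl | ⟨w, x, rfl⟩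
        · simp [childLinesAt, linesAt] at hv
        simp only [childLinesAt, linesAt, mem_filter, append_singleton_mem_lines_iff,
          lastNode_append_singleton, prevNode_append_singleton] at hv
        obtain ⟨⟨⟨hw, -⟩, hx⟩, b, rfl⟩ := hv
        exact mem_image₂.2 ⟨w, mem_filter.2 ⟨hw, by simpa using hx⟩, b, mem_univ _, rfl⟩
    _ ≤ #(linesAt m d) * 2 := card_image₂_le _ _ _

lemma card_jumpLinesAt_succ_le (m d : ℕ) :
    #(jumpLinesAt m (d + 1)) ≤ #(levelLinesAt m d) * 2 := by
  calc #(jumpLinesAt m (d + 1))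
      ≤ #(image₂ (fun w b => w ++ [prevNode w ++ [b]]) (levelLinesAt m d) univ) := by
        refine card_le_card fun v hv => ?_
        rcases v.eq_nil_or_concat' with rfl | ⟨w, x, rfl⟩
        · simp [jumpLinesAt, linesAt] at hv
        simp only [jumpLinesAt, linesAt, mem_filter, append_singleton_mem_lines_iff,
          lastNode_append_singleton, prevNode_append_singleton] at hv
        obtain ⟨⟨⟨hw, -, hx, -⟩, hxd⟩, hwd, hnot⟩ := hv
        obtain ⟨b, rfl⟩ := hx.resolve_left hnot
        refine mem_image₂.2 ⟨w, ?_, b, mem_univ _, rfl⟩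
        simp only [levelLinesAt, linesAt, mem_filter, List.length_append,
          List.length_singleton] at hxd ⊢
        exact ⟨⟨hw, by omega⟩, by omega⟩
    _ ≤ #(levelLinesAt m d) * 2 := card_image₂_le _ _ _

lemma card_levelLinesAt_le {m d : ℕ} (hd : d ≠ 0) :
    #(levelLinesAt m d) ≤ #(childLinesAt m d) + #(jumpLinesAt m d) * 2 := by
  calc #(levelLinesAt m d)
      ≤ #((childLinesAt m d).image (fun w => w ++ [prevNode w ++ [!(lastNode w).getLastD false]])
          ∪ image₂ (fun w b => w ++ [prevNode w ++ [b]]) (jumpLinesAt m d) univ) := by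
        refine card_le_card fun v hv => ?_
        rcases v.eq_nil_or_concat' with rfl | ⟨w, x, rfl⟩
        · simp [levelLinesAt, linesAt] at hv
          omega
        simp only [levelLinesAt, linesAt, mem_filter, append_singleton_mem_lines_iff,
          lastNode_append_singleton, prevNode_append_singleton] at hv
        obtain ⟨⟨⟨hw, hxw, hx, -⟩, hxd⟩, hwd⟩ := hv
        obtain ⟨b, rfl⟩ := hx.resolve_left fun h => by have := h.length_eq; omega
        have hw' : w ∈ linesAt m d := mem_filter.2 ⟨hw, hwd⟩
        simp only [List.length_append, List.length_singleton] at hxd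
        by_cases hchild : IsChild (prevNode w) (lastNode w)
        · obtain ⟨c, hc⟩ := hchild
          have hne : w ≠ [] := by rintro rfl; simp at hwd; omega
          have hbc : b ≠ c := by
            rintro rfl
            exact hxw (hc ▸ lastNode_mem hne)
          refine mem_union_left _ (mem_image.2 ⟨w, mem_filter.2 ⟨hw', c, hc⟩, ?_⟩)
          rw [hc, List.getLastD_concat, ← Bool.eq_not.2 hbc]
        · exact mem_union_right _ (mem_image₂.2
            ⟨w, mem_filter.2 ⟨hw', by omega, hchild⟩, b, mem_univ _, rfl⟩)
    _ ≤ #(childLinesAt m d) + #(jumpLinesAt m d) * 2 :=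
        (card_union_le _ _).trans (Nat.add_le_add card_image_le (card_image₂_le _ _ _))

theorem card_lines_le {s : ℝ} (hs : 3 ≤ s ^ 2) (hs' : 3 ≤ 2 * s) (m : ℕ) :
    (#(lines m) : ℝ) ≤ (4 + 2 * s) ^ (m + 1) := by
  have hfib : #(lines m) = ∑ d ∈ range (m + 1), #(linesAt m d) :=
    card_eq_sum_card_fiberwise fun v hv => mem_range.2 (Nat.lt_succ_of_le (length_lastNode_le hv))
  have hdepth (d : ℕ) : (#(linesAt m d) : ℝ) ≤ (4 + 2 * s) ^ d :=
    le_pow_of_recurrence hs hs' (fun d _ => card_linesAt_le m d) (card_linesAt_zero_le m)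
      (by rw [jumpLinesAt_one, card_empty]) (card_childLinesAt_succ_le m)
      (card_jumpLinesAt_succ_le m) (fun _ hd => card_levelLinesAt_le hd) d
  calc (#(lines m) : ℝ) = ∑ d ∈ range (m + 1), (#(linesAt m d) : ℝ) := by
        rw [hfib, Nat.cast_sum]
    _ ≤ ∑ d ∈ range (m + 1), (4 + 2 * s) ^ d := sum_le_sum fun d _ => hdepth d
    _ ≤ (4 + 2 * s) ^ (m + 1) := geom_sum_le_pow (by linarith) _

lemma length_add_one_le {m : ℕ} {v : List (List Bool)} (hv : v ∈ lines m) :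
    v.length + 1 ≤ 2 * (m + 1) := by
  have := (mem_lines.1 hv).1.length_le
  have := length_lastNode_le hv
  omega

theorem sum_length_add_one_le {s : ℝ} (hs : 3 ≤ s ^ 2) (hs' : 3 ≤ 2 * s) (m : ℕ) :
    ∑ v ∈ lines m, ((v.length : ℝ) + 1) ≤ 2 * (m + 1) * (4 + 2 * s) ^ (m + 1) :=
  calc ∑ v ∈ lines m, ((v.length : ℝ) + 1) ≤ ∑ v ∈ lines m, (2 * (m + 1) : ℝ) :=
        sum_le_sum fun v hv => by exact_mod_cast length_add_one_le hv
    _ = 2 * (m + 1) * #(lines m) := by rw [sum_const, nsmul_eq_mul, mul_comm]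
    _ ≤ 2 * (m + 1) * (4 + 2 * s) ^ (m + 1) := by gcongr; exact card_lines_le hs hs' m

end TwoTreeLine

-- Every `s ≥ √3` gives the growth factor `4 + 2 * s`; the best one, `4 + 2 * √3 ≈ 7.46410`, lies
-- just below `2 ^ 2.9 ≈ 7.46431`, so a rational `s` slightly above `√3` still fits.
lemma growth_le_two_rpow : 4 + 2 * (17321 / 10000 : ℝ) ≤ 2 ^ ((29 : ℝ) / 10) := by
  refine le_of_pow_le_pow_left₀ (n := 10) (by norm_num) (by positivity) ?_
  rw [← Real.rpow_natCast (2 ^ _) 10, ← Real.rpow_mul (by norm_num)]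
  norm_num

/-- Theorem 3.2: the total number of nodes (counting the root) contained in all
2-tree-lines starting from the root that lie within the full binary tree with
`n` levels (hence `m = 2^n - 1` nodes) is at most `2n * (2^n)^(29/10)`, i.e.
the brute force method over all 2-tree-lines runs in time `O(m^{2.9} log m)`. -/
theorem brute_force_two_tree_lines_run_time (n : ℕ) (hn : 1 ≤ n) :
    ∃ hS : {v : List (List Bool) |
        IsTwoTreeLine v ∧ ∀ p ∈ v, p.length ≤ n - 1}.Finite,
      ∑ v ∈ hS.toFinset, ((v.length : ℝ) + 1) ≤
        (2 * n) * ((2 : ℝ) ^ n) ^ ((29 : ℝ) / 10) := by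
  refine ⟨finite_setOf_isTwoTreeLine (n - 1), ?_⟩
  obtain ⟨m, rfl⟩ : ∃ m, n = m + 1 := ⟨n - 1, by omega⟩
  calc _ ≤ 2 * (m + 1) * (4 + 2 * (17321 / 10000 : ℝ)) ^ (m + 1) :=
        TwoTreeLine.sum_length_add_one_le (by norm_num) (by norm_num) m
    _ ≤ 2 * (m + 1) * ((2 : ℝ) ^ ((29 : ℝ) / 10)) ^ (m + 1) := by gcongr; exact growth_le_two_rpow
    _ = _ := by
        rw [← Real.rpow_natCast, ← Real.rpow_natCast, ← Real.rpow_mul (by norm_num),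
          ← Real.rpow_mul (by norm_num), mul_comm (29 / 10 : ℝ)]
        push_cast
        ring
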